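/- arXiv:2006.12034 — 5 statements merged into one kernel-verified Lean document; each statement's English description precedes it below -/
import Mathlib

section
/- Let u = (7√11 + 3√3)^(1/3) and v = (7√11 − 3√3)^(1/3) (real cube roots). Then 7√11 + 8(u + v) = √((8√3(u − v) + 3)² + 4626). -/
theorem incredible_identity_d11_first :
    let u := (7 * Real.sqrt 11 + 3 * Real.sqrt 3) ^ ((1:ℝ)/3)
    let v := (7 * Real.sqrt 11 - 3 * Real.sqrt 3) ^ ((1:ℝ)/3)
    7 * Real.sqrt 11 + 8 * (u + v)
      = Real.sqrt ((8 * Real.sqrt 3 * (u - v) + 3) ^ 2 + 4626) := by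
  intro u v
  have ha : (0:ℝ) ≤ Real.sqrt 3 := Real.sqrt_nonneg 3
  have hb : (0:ℝ) ≤ Real.sqrt 11 := Real.sqrt_nonneg 11
  have h3 : Real.sqrt 3 ^ 2 = 3 := Real.sq_sqrt (by norm_num)
  have h11 : Real.sqrt 11 ^ 2 = 11 := Real.sq_sqrt (by norm_num)
  have hle : Real.sqrt 3 ≤ Real.sqrt 11 := Real.sqrt_le_sqrt (by norm_num)
  have hpos1 : (0:ℝ) ≤ 7 * Real.sqrt 11 + 3 * Real.sqrt 3 := by positivity
  have hpos2 : (0:ℝ) ≤ 7 * Real.sqrt 11 - 3 * Real.sqrt 3 := by nlinarith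
  have hu0 : (0:ℝ) ≤ u := Real.rpow_nonneg hpos1 _
  have hv0 : (0:ℝ) ≤ v := Real.rpow_nonneg hpos2 _
  have hu3 : u ^ 3 = 7 * Real.sqrt 11 + 3 * Real.sqrt 3 := by
    show ((7 * Real.sqrt 11 + 3 * Real.sqrt 3) ^ ((1:ℝ)/3)) ^ 3 = _
    rw [← Real.rpow_natCast (_ ^ ((1:ℝ)/3)) 3, ← Real.rpow_mul hpos1]
    norm_num
  have hv3 : v ^ 3 = 7 * Real.sqrt 11 - 3 * Real.sqrt 3 := by
    show ((7 * Real.sqrt 11 - 3 * Real.sqrt 3) ^ ((1:ℝ)/3)) ^ 3 = _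
    rw [← Real.rpow_natCast (_ ^ ((1:ℝ)/3)) 3, ← Real.rpow_mul hpos2]
    norm_num
  have huv : u * v = 8 := by
    have hcube : (u * v) ^ 3 = 512 := by
      have : (u*v)^3 = u^3 * v^3 := by ring
      rw [this, hu3, hv3]
      nlinarith [h3, h11]
    nlinarith [sq_nonneg (u*v - 8), sq_nonneg (u*v + 4), mul_nonneg hu0 hv0]
  have key : (8 * Real.sqrt 3 * (u - v) + 3) ^ 2 + 4626
      = (7 * Real.sqrt 11 + 8 * (u + v)) ^ 2 := by
    linear_combination (64*(u-v)^2) * h3 + (-49) * h11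
      + (-512 - 16*(u^2+v^2)) * huv + (16*v) * hu3 + (16*u) * hv3
  rw [key, Real.sqrt_sq (by positivity)]
end

section
/- Let u = (7√11 + 3√3)^(1/3) and v = (7√11 − 3√3)^(1/3), and w = (35099 + 21√33)^(1/3), z = (35099 − 21√33)^(1/3) (all real cube roots of positive reals). Then √((8√3(u − v) + 3)² + 4626) = √(48(w + z) + 1563). -/
set_option maxHeartbeats 1600000 in
theorem incredible_identity_d11_second :
    let u := (7 * Real.sqrt 11 + 3 * Real.sqrt 3) ^ ((1:ℝ)/3)
    let v := (7 * Real.sqrt 11 - 3 * Real.sqrt 3) ^ ((1:ℝ)/3)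
    let w := (35099 + 21 * Real.sqrt 33) ^ ((1:ℝ)/3)
    let z := (35099 - 21 * Real.sqrt 33) ^ ((1:ℝ)/3)
    Real.sqrt ((8 * Real.sqrt 3 * (u - v) + 3) ^ 2 + 4626)
      = Real.sqrt (48 * (w + z) + 1563) := by
  intro u v w z
  set r := Real.sqrt 3 with hrdef
  set q := Real.sqrt 11 with hqdef
  set p := Real.sqrt 33 with hpdef
  have hr0 : 0 ≤ r := Real.sqrt_nonneg 3
  have hq0 : 0 ≤ q := Real.sqrt_nonneg 11
  have hp0 : 0 ≤ p := Real.sqrt_nonneg 33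
  have hr2 : r ^ 2 = 3 := Real.sq_sqrt (by norm_num)
  have hq2 : q ^ 2 = 11 := Real.sq_sqrt (by norm_num)
  have hp2 : p ^ 2 = 33 := Real.sq_sqrt (by norm_num)
  have hrlt : r < 2 := by nlinarith
  have hqgt : 3 < q := by nlinarith
  have hplt : p < 6 := by nlinarith
  -- cube lemma
  have cube : ∀ x : ℝ, 0 ≤ x → (x ^ ((1:ℝ)/3)) ^ 3 = x := by
    intro x hx
    rw [← Real.rpow_natCast (x ^ ((1:ℝ)/3)) 3, ← Real.rpow_mul hx]
    norm_num
  have hA : (0:ℝ) ≤ 7 * q + 3 * r := by positivity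
  have hB : (0:ℝ) ≤ 7 * q - 3 * r := by nlinarith
  have hW : (0:ℝ) ≤ 35099 + 21 * p := by positivity
  have hZ : (0:ℝ) ≤ 35099 - 21 * p := by nlinarith
  have hu3 : u ^ 3 = 7 * q + 3 * r := cube _ hA
  have hv3 : v ^ 3 = 7 * q - 3 * r := cube _ hB
  have hw3 : w ^ 3 = 35099 + 21 * p := cube _ hW
  have hz3 : z ^ 3 = 35099 - 21 * p := cube _ hZ
  have huv : u * v = 8 := by
    have h1 : u * v = ((7 * q + 3 * r) * (7 * q - 3 * r)) ^ ((1:ℝ)/3) :=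
      (Real.mul_rpow hA hB).symm
    have h2 : (7 * q + 3 * r) * (7 * q - 3 * r) = 512 := by nlinarith
    rw [h1, h2, show (512:ℝ) = (8:ℝ) ^ (3:ℕ) by norm_num,
      ← Real.rpow_natCast (8:ℝ) 3, ← Real.rpow_mul (by norm_num)]
    norm_num
  have hwz : w * z = 1072 := by
    have h1 : w * z = ((35099 + 21 * p) * (35099 - 21 * p)) ^ ((1:ℝ)/3) :=
      (Real.mul_rpow hW hZ).symm
    have h2 : (35099 + 21 * p) * (35099 - 21 * p) = 1231925248 := by nlinarith
    rw [h1, h2, show (1231925248:ℝ) = (1072:ℝ) ^ (3:ℕ) by norm_num,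
      ← Real.rpow_natCast (1072:ℝ) 3, ← Real.rpow_mul (by norm_num)]
    norm_num
  have hu0 : 0 ≤ u := Real.rpow_nonneg hA _
  have hv0 : 0 ≤ v := Real.rpow_nonneg hB _
  have hw0 : 0 ≤ w := Real.rpow_nonneg hW _
  have hz0 : 0 ≤ z := Real.rpow_nonneg hZ _
  have huv_lt : v < u := by
    apply Real.rpow_lt_rpow hB _ (by norm_num)
    nlinarith
  clear_value u v w z
  set s := u - v with hsdef
  set t := w + z with htdef
  have hs3 : s ^ 3 = 6 * r - 24 * s := by
    linear_combination hu3 - hv3 - 3 * (u - v) * huv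
  have ht3 : t ^ 3 = 3216 * t + 70198 := by
    linear_combination hw3 + hz3 + 3 * (w + z) * hwz
  -- positivity of s
  have hs_pos : 0 < s := by rw [hsdef]; linarith
  -- bounds on t
  have hw32 : (32:ℝ) < w := by
    by_contra h
    push_neg at h
    have h3 : w ^ 3 ≤ 32768 := by
      have h4 := pow_le_pow_left₀ hw0 h 3
      norm_num at h4; linarith
    rw [hw3] at h3
    linarith
  have hz32 : (32:ℝ) < z := by
    by_contra h
    push_neg at h
    have h3 : z ^ 3 ≤ 32768 := by
      have h4 := pow_le_pow_left₀ hz0 h 3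
      norm_num at h4; linarith
    rw [hz3] at h3
    linarith
  have ht64 : 64 < t := by rw [htdef]; linarith
  set t₀ : ℝ := 4 * s ^ 2 + r * s + 64 with ht0def
  have ht03 : t₀ ^ 3 = 3216 * t₀ + 70198 := by
    simp only [ht0def]
    linear_combination (771 * r + 1572 * s + 48 * s ^ 2 * r + 64 * s ^ 3) * hs3 +
      (4626 + 480 * s ^ 2 + s ^ 3 * r + 12 * s ^ 4) * hr2
  have ht064 : 64 ≤ t₀ := by
    rw [ht0def]
    have h1 : 0 ≤ r * s := mul_nonneg hr0 hs_pos.le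
    have h2 : 0 ≤ s ^ 2 := sq_nonneg s
    linarith
  have hfac : (t - t₀) * (t ^ 2 + t * t₀ + t₀ ^ 2 - 3216) = 0 := by
    linear_combination ht3 - ht03
  have hfac2 : t ^ 2 + t * t₀ + t₀ ^ 2 - 3216 ≠ 0 := by
    have hA1 : (64:ℝ) * 64 ≤ t * t₀ := mul_le_mul ht64.le ht064 (by norm_num) (by linarith)
    have hA2 : (64:ℝ) * 64 ≤ t ^ 2 := by
      rw [pow_two]; exact mul_le_mul ht64.le ht64.le (by norm_num) (by linarith)
    have hA3 : (64:ℝ) * 64 ≤ t₀ ^ 2 := by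
      rw [pow_two]; exact mul_le_mul ht064 ht064 (by norm_num) (by linarith)
    intro h
    linarith
  have htt0 : t = t₀ := by
    have := (mul_eq_zero.mp hfac).resolve_right hfac2
    linarith
  congr 1
  simp only [htt0, ht0def]
  linear_combination 64 * s ^ 2 * hr2
end

section
/- For j < 0 real, the cubic z³ − (j/256)z + j/256 has exactly one real root z₀, and it satisfies 0 < z₀ < 1. -/
theorem weber_cubic_unique_real_root (j : ℝ) (hj : j < 0) :
    ∃ z₀ : ℝ, (z₀ ^ 3 - (j / 256) * z₀ + j / 256 = 0 ∧ 0 < z₀ ∧ z₀ < 1) ∧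
      ∀ z : ℝ, z ^ 3 - (j / 256) * z + j / 256 = 0 → z = z₀ := by
  set a : ℝ := j / 256 with ha
  have ha' : a < 0 := by rw [ha]; linarith
  set f : ℝ → ℝ := fun z => z ^ 3 - a * z + a with hf
  have hmono : StrictMono f := by
    intro x y hxy
    simp only [hf]
    nlinarith [sq_nonneg (x + y), sq_nonneg (x - y), sq_nonneg x, sq_nonneg y]
  have hcont : ContinuousOn f (Set.Icc (0 : ℝ) 1) := by
    apply Continuous.continuousOn; fun_prop
  have h0 : f 0 = a := by simp [hf]
  have h1 : f 1 = 1 := by simp [hf]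
  have hmem : (0 : ℝ) ∈ Set.Ioo (f 0) (f 1) := by
    rw [h0, h1]; exact ⟨ha', zero_lt_one⟩
  obtain ⟨z₀, hz₀mem, hz₀⟩ := intermediate_value_Ioo (by norm_num : (0:ℝ) ≤ 1) hcont hmem
  refine ⟨z₀, ⟨hz₀, hz₀mem.1, hz₀mem.2⟩, fun z hz => hmono.injective ?_⟩
  simp only [hf]
  rw [hz]; exact hz₀.symm
end

section
/- The complex number λ = 1/2 + i√(2 + √5) satisfies 4λ² − 4λ + 9 + 4√5 = 0, and hence F(λ, j₅) = 0 where j₅ = 8(25 − 13√5)³. -/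
theorem lambda5_root (l : ℂ)
    (hl : l = 1 / 2 + Complex.I * Real.sqrt (2 + Real.sqrt 5)) :
    4 * l ^ 2 - 4 * l + 9 + 4 * (Real.sqrt 5 : ℂ) = 0 ∧
    (let j : ℂ := 8 * (25 - 13 * (Real.sqrt 5 : ℂ)) ^ 3
     256 * l ^ 6 - 768 * l ^ 5 + (-j + 1536) * l ^ 4 + (2 * j - 1792) * l ^ 3
       + (-j + 1536) * l ^ 2 - 768 * l + 256 = 0) := by
  have hs : ((Real.sqrt 5 : ℝ) : ℂ) ^ 2 = 5 := by
    rw [← Complex.ofReal_pow, Real.sq_sqrt (by norm_num : (5:ℝ) ≥ 0)]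
    norm_num
  have ht : ((Real.sqrt (2 + Real.sqrt 5) : ℝ) : ℂ) ^ 2
      = 2 + ((Real.sqrt 5 : ℝ) : ℂ) := by
    rw [← Complex.ofReal_pow, Real.sq_sqrt (by positivity : (2 + Real.sqrt 5 : ℝ) ≥ 0)]
    push_cast
    ring
  have h1 : 4 * l ^ 2 - 4 * l + 9 + 4 * (Real.sqrt 5 : ℂ) = 0 := by
    subst hl
    linear_combination 4 * ((Real.sqrt (2 + Real.sqrt 5) : ℝ) : ℂ) ^ 2 * Complex.I_sq
      - 4 * ht
  refine ⟨h1, ?_⟩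
  set s : ℂ := ((Real.sqrt 5 : ℝ) : ℂ) with hsdef
  intro j
  linear_combination
    (64 * l ^ 4 - 128 * l ^ 3 + (-157888 + 70656 * s) * l ^ 2
      + (157952 - 70656 * s) * l + (2304 - 1024 * s)) * h1
    + (4096 + 282624 * l + (-384024 + 17576 * s) * l ^ 2
      + (202800 - 35152 * s) * l ^ 3 + (-101400 + 17576 * s) * l ^ 4) * hs
end

section
/- For x ≥ 1, the function λ(√(−x)) := 16·e^(−π√x/2)·∏_{n≥1} ((1 + e^(−π√x·n))/(1 + e^(−π√x·(n−1/2))))^8 satisfies 0 < λ(√(−x)) < 1. -/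
open Real

lemma seg (a b q : ℝ) (ha : 0 ≤ a) (h1 : a ≤ q) (h2 : q ≤ b)
    (hb : 16*b*((1+b^2)/(1+a))^8*((1+b^4)/(1+a^3))^8 < 1) :
    16*q*((1+q^2)/(1+q))^8*((1+q^4)/(1+q^3))^8 < 1 := by
  have hq0 : 0 ≤ q := ha.trans h1
  have hb0 : 0 ≤ b := hq0.trans h2
  have h2' : q^2 ≤ b^2 := by nlinarith
  have h3' : a^3 ≤ q^3 := by nlinarith [mul_nonneg ha hq0, mul_nonneg (mul_nonneg ha ha) hq0, mul_nonneg (mul_nonneg hq0 hq0) hq0]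
  have h4' : q^4 ≤ b^4 := by nlinarith [mul_nonneg hq0 hq0, mul_nonneg hb0 hb0, mul_nonneg (mul_nonneg hq0 hq0) hq0]
  have hA : (0:ℝ) ≤ ((1+b^2)/(1+a))^8 := by positivity
  have hB : (0:ℝ) ≤ 16*b*((1+b^2)/(1+a))^8 := mul_nonneg (by linarith) hA
  calc 16*q*((1+q^2)/(1+q))^8*((1+q^4)/(1+q^3))^8
      ≤ 16*b*((1+b^2)/(1+a))^8*((1+b^4)/(1+a^3))^8 := by
        gcongr
    _ < 1 := hb

lemma key_poly (q : ℝ) (hq0 : 0 < q) (hq : q ≤ 0.22) :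
    16*q*((1+q^2)/(1+q))^8*((1+q^4)/(1+q^3))^8 < 1 := by
  rcases le_or_gt q 0.0605 with h0 | h0
  · exact seg 0 0.0605 q (by norm_num) hq0.le h0 (by norm_num)
  rcases le_or_gt q 0.0932 with h1 | h1
  · exact seg 0.0605 0.0932 q (by norm_num) h0.le h1 (by norm_num)
  rcases le_or_gt q 0.1151 with h2 | h2
  · exact seg 0.0932 0.1151 q (by norm_num) h1.le h2 (by norm_num)
  rcases le_or_gt q 0.1313 with h3 | h3
  · exact seg 0.1151 0.1313 q (by norm_num) h2.le h3 (by norm_num)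
  rcases le_or_gt q 0.144 with h4 | h4
  · exact seg 0.1313 0.144 q (by norm_num) h3.le h4 (by norm_num)
  rcases le_or_gt q 0.1544 with h5 | h5
  · exact seg 0.144 0.1544 q (by norm_num) h4.le h5 (by norm_num)
  rcases le_or_gt q 0.1632 with h6 | h6
  · exact seg 0.1544 0.1632 q (by norm_num) h5.le h6 (by norm_num)
  rcases le_or_gt q 0.1707 with h7 | h7
  · exact seg 0.1632 0.1707 q (by norm_num) h6.le h7 (by norm_num)
  rcases le_or_gt q 0.1773 with h8 | h8
  · exact seg 0.1707 0.1773 q (by norm_num) h7.le h8 (by norm_num)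
  rcases le_or_gt q 0.1831 with h9 | h9
  · exact seg 0.1773 0.1831 q (by norm_num) h8.le h9 (by norm_num)
  rcases le_or_gt q 0.1883 with h10 | h10
  · exact seg 0.1831 0.1883 q (by norm_num) h9.le h10 (by norm_num)
  rcases le_or_gt q 0.193 with h11 | h11
  · exact seg 0.1883 0.193 q (by norm_num) h10.le h11 (by norm_num)
  rcases le_or_gt q 0.1972 with h12 | h12
  · exact seg 0.193 0.1972 q (by norm_num) h11.le h12 (by norm_num)
  rcases le_or_gt q 0.2011 with h13 | h13
  · exact seg 0.1972 0.2011 q (by norm_num) h12.le h13 (by norm_num)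
  rcases le_or_gt q 0.2046 with h14 | h14
  · exact seg 0.2011 0.2046 q (by norm_num) h13.le h14 (by norm_num)
  rcases le_or_gt q 0.2079 with h15 | h15
  · exact seg 0.2046 0.2079 q (by norm_num) h14.le h15 (by norm_num)
  rcases le_or_gt q 0.2109 with h16 | h16
  · exact seg 0.2079 0.2109 q (by norm_num) h15.le h16 (by norm_num)
  rcases le_or_gt q 0.2137 with h17 | h17
  · exact seg 0.2109 0.2137 q (by norm_num) h16.le h17 (by norm_num)
  rcases le_or_gt q 0.2163 with h18 | h18
  · exact seg 0.2137 0.2163 q (by norm_num) h17.le h18 (by norm_num)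
  rcases le_or_gt q 0.2187 with h19 | h19
  · exact seg 0.2163 0.2187 q (by norm_num) h18.le h19 (by norm_num)
  · exact seg 0.2187 0.22 q (by norm_num) h19.le hq (by norm_num)

theorem lambda_bounds (x : ℝ) (hx : 1 ≤ x) :
    let L := 16 * Real.exp (-Real.pi * Real.sqrt x / 2) *
      ∏' n : ℕ, ((1 + Real.exp (-Real.pi * Real.sqrt x * (n + 1))) /
        (1 + Real.exp (-Real.pi * Real.sqrt x * (n + 1 - 1 / 2)))) ^ 8
    0 < L ∧ L < 1 := by
  intro L
  have hs1 : 1 ≤ Real.sqrt x := Real.one_le_sqrt.mpr hx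
  set c : ℝ := Real.pi * Real.sqrt x with hc
  have hc3 : 3 ≤ c := by nlinarith [Real.pi_gt_three]
  have hcpos : 0 < c := by linarith
  set q : ℝ := Real.exp (-c / 2) with hqdef
  have hq0 : 0 < q := Real.exp_pos _
  -- the factors
  set f : ℕ → ℝ := fun n => ((1 + Real.exp (-c * (n + 1))) /
      (1 + Real.exp (-c * (n + 1 - 1 / 2)))) ^ 8 with hf
  have hfpos : ∀ n, 0 < f n := fun n => by
    have := Real.exp_pos (-c * (n + 1))
    have := Real.exp_pos (-c * (n + 1 - 1 / 2))
    positivity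
  have hfle1 : ∀ n, f n ≤ 1 := by
    intro n
    have hAB : Real.exp (-c * (n + 1)) ≤ Real.exp (-c * (n + 1 - 1 / 2)) := by
      apply Real.exp_le_exp.mpr
      nlinarith [Nat.cast_nonneg (α := ℝ) n]
    have hB : (0:ℝ) < 1 + Real.exp (-c * (n + 1 - 1 / 2)) := by positivity
    apply pow_le_one₀ (by positivity)
    rw [div_le_one hB]; linarith
  -- L in terms of f
  have hL : L = 16 * q * ∏' n, f n := by
    show (16 * Real.exp (-Real.pi * Real.sqrt x / 2) * _) = _
    congr 2
    · congr 1; ring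
    · exact funext fun n => by rw [hf]; congr 3 <;> · congr 1; ring
  -- summability of logs
  have hlogle : ∀ n, |Real.log (f n)| ≤ 8 * q * Real.exp (-c) ^ n := by
    intro n
    set A := Real.exp (-c * (n + 1)) with hA
    set B := Real.exp (-c * (n + 1 - 1 / 2)) with hB
    have hA0 : 0 < A := Real.exp_pos _
    have hB0 : 0 < B := Real.exp_pos _
    have hABle : A ≤ B := by
      apply Real.exp_le_exp.mpr; nlinarith [Nat.cast_nonneg (α := ℝ) n]
    have hlogf : Real.log (f n) = 8 * (Real.log (1 + A) - Real.log (1 + B)) := by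
      rw [hf]
      rw [Real.log_pow, Real.log_div (by positivity) (by positivity)]
      push_cast; ring
    have h1 : Real.log (1 + A) - Real.log (1 + B) ≤ 0 := by
      have := Real.log_le_log (by positivity : (0:ℝ) < 1 + A) (by linarith : 1 + A ≤ 1 + B)
      linarith
    have h2 : Real.log (1 + B) - Real.log (1 + A) ≤ B := by
      have hup : Real.log (1 + B) ≤ B := by
        have := Real.log_le_sub_one_of_pos (by positivity : (0:ℝ) < 1 + B)
        linarith
      have hlo : 0 ≤ Real.log (1 + A) := Real.log_nonneg (by linarith)
      linarith
    have hBval : B = q * Real.exp (-c) ^ n := by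
      rw [hB, hqdef, ← Real.exp_nat_mul, ← Real.exp_add]
      congr 1; ring
    rw [hlogf, abs_of_nonpos (by linarith)]
    linarith [hBval]
  have hgeom : Summable fun n : ℕ => 8 * q * Real.exp (-c) ^ n := by
    apply Summable.mul_left
    apply summable_geometric_of_lt_one (Real.exp_nonneg _)
    exact Real.exp_lt_one_iff.mpr (by linarith)
  have hlogsum : Summable fun n => Real.log (f n) := by
    apply Summable.of_abs
    exact Summable.of_nonneg_of_le (fun n => abs_nonneg _) hlogle hgeom
  -- product = exp of sum
  have hprod : Real.exp (∑' n, Real.log (f n)) = ∏' n, f n := by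
    have := Real.rexp_tsum_eq_tprod hfpos hlogsum
    simpa using this
  constructor
  · rw [hL, ← hprod]; positivity
  -- upper bound
  · have hsum01 : ∑' n, Real.log (f n) ≤ Real.log (f 0) + Real.log (f 1) := by
      have hlogsum1 : Summable fun n => Real.log (f (n + 1)) :=
        (summable_nat_add_iff (f := fun n => Real.log (f n)) 1).mpr hlogsum
      have htail : ∑' n : ℕ, Real.log (f (n + 1 + 1)) ≤ 0 :=
        tsum_nonpos fun n => Real.log_nonpos (hfpos _).le (hfle1 _)
      calc ∑' n, Real.log (f n)
          = Real.log (f 0) + ∑' n, Real.log (f (n + 1)) := Summable.tsum_eq_zero_add hlogsum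
        _ = Real.log (f 0) + (Real.log (f 1) + ∑' n, Real.log (f (n + 1 + 1))) := by
            rw [Summable.tsum_eq_zero_add hlogsum1]
        _ ≤ Real.log (f 0) + Real.log (f 1) := by linarith
    have hmono : (∏' n, f n) ≤ f 0 * f 1 := by
      rw [← hprod]
      calc Real.exp (∑' n, Real.log (f n)) ≤ Real.exp (Real.log (f 0) + Real.log (f 1)) :=
            Real.exp_le_exp.mpr hsum01
        _ = f 0 * f 1 := by
            rw [Real.exp_add, Real.exp_log (hfpos 0), Real.exp_log (hfpos 1)]
    have hq2 : Real.exp (-c) = q ^ 2 := by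
      rw [hqdef, ← Real.exp_nat_mul]; congr 1; push_cast; ring
    have hq3 : Real.exp (-c * (3 / 2)) = q ^ 3 := by
      rw [hqdef, ← Real.exp_nat_mul]; congr 1; push_cast; ring
    have hq4 : Real.exp (-c * 2) = q ^ 4 := by
      rw [hqdef, ← Real.exp_nat_mul]; congr 1; push_cast; ring
    have e0 : -c * (((0:ℕ):ℝ) + 1) = -c := by push_cast; ring
    have e0' : -c * (((0:ℕ):ℝ) + 1 - 1 / 2) = -c / 2 := by push_cast; ring
    have e1 : -c * (((1:ℕ):ℝ) + 1) = -c * 2 := by push_cast; ring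
    have e1' : -c * (((1:ℕ):ℝ) + 1 - 1 / 2) = -c * (3 / 2) := by push_cast; ring
    have hf0 : f 0 = ((1 + q ^ 2) / (1 + q)) ^ 8 := by
      show ((1 + Real.exp (-c * (((0:ℕ):ℝ) + 1))) /
          (1 + Real.exp (-c * (((0:ℕ):ℝ) + 1 - 1 / 2)))) ^ 8 = _
      rw [e0, e0', hq2, hqdef]
    have hf1 : f 1 = ((1 + q ^ 4) / (1 + q ^ 3)) ^ 8 := by
      show ((1 + Real.exp (-c * (((1:ℕ):ℝ) + 1))) /
          (1 + Real.exp (-c * (((1:ℕ):ℝ) + 1 - 1 / 2)))) ^ 8 = _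
      rw [e1, e1', hq3, hq4]
    have hq22 : q ≤ 0.22 := by
      have h1 : q ≤ Real.exp (-(Real.pi / 2)) := by
        apply Real.exp_le_exp.mpr
        nlinarith [Real.pi_pos]
      have h2 : (1 + Real.pi / 64 : ℝ) ^ (32:ℕ) ≤ Real.exp (Real.pi / 2) := by
        have h : Real.exp (Real.pi / 2) = Real.exp (Real.pi / 64) ^ (32:ℕ) := by
          rw [← Real.exp_nat_mul]; congr 1; push_cast; ring
        rw [h]
        apply pow_le_pow_left₀ (by positivity)
        linarith [Real.add_one_le_exp (Real.pi / 64)]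
      have h3 : (4.6 : ℝ) ≤ (1 + Real.pi / 64) ^ (32:ℕ) := by
        calc (4.6:ℝ) ≤ (1 + 3.141592 / 64) ^ (32:ℕ) := by norm_num
          _ ≤ (1 + Real.pi / 64) ^ (32:ℕ) := by
              apply pow_le_pow_left₀ (by norm_num)
              linarith [Real.pi_gt_d6]
      have h5 : (4.6:ℝ) ≤ Real.exp (Real.pi / 2) := le_trans h3 h2
      have h6 : Real.exp (-(Real.pi / 2)) ≤ 0.22 := by
        rw [Real.exp_neg]
        have hp : (0:ℝ) < Real.exp (Real.pi / 2) := Real.exp_pos _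
        calc (Real.exp (Real.pi / 2))⁻¹ ≤ (4.6:ℝ)⁻¹ := by
              apply inv_anti₀ (by norm_num) h5
          _ ≤ 0.22 := by norm_num
      linarith
    have hfinal := key_poly q hq0 hq22
    calc L = 16 * q * ∏' n, f n := hL
      _ ≤ 16 * q * (f 0 * f 1) := by
          apply mul_le_mul_of_nonneg_left hmono (by positivity)
      _ = 16 * q * ((1 + q ^ 2) / (1 + q)) ^ 8 * ((1 + q ^ 4) / (1 + q ^ 3)) ^ 8 := by
          rw [hf0, hf1]; ring
      _ < 1 := hfinal
end
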